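/- arXiv:1709.05103 — 2 statements merged into one kernel-verified Lean document; each statement's English description precedes it below -/
import Mathlib

section
/- Fix 0 < β < 1, 0 < l, a real δ, and a continuous function τ on [0, l]. Then for all y > 0: (i) for |a| ≥ 2l and each choice of sign, ∫₀^l 𝓝_{0l}^{δ, a ± x, y} τ dx = ± sign(a) [𝓝_{0l}^{δ+β, a, y} τ − 𝓝_{0l}^{δ+β, a ± l, y} τ]; (ii) ∫₀^l 𝓝_{0l}^{δ, -x, y} τ dx = 𝓝_{0l}^{δ+β, 0, y} τ − 𝓝_{0l}^{δ+β, -l, y} τ; (iii) ∫₀^l 𝓝_{0l}^{δ, x, y} τ dx = −[𝓝_{0l}^{δ+β, 0, y} τ + 𝓝_{0l}^{δ+β, l, y} τ] + (y^{δ+β-1}/Γ(δ+β)) ∫₀^l τ(x) dx. -/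
/-- The Wright function `φ(ρ, μ; z) = ∑ z^k / (k! Γ(ρk + μ))`. -/
noncomputable def wright (ρ μ : ℝ) (z : ℝ) : ℝ :=
  ∑' k : ℕ, z ^ k / (Nat.factorial k * Real.Gamma (ρ * k + μ))

/-- The operator 𝓝_{x₁x₂}^{θ,x,y}. -/
noncomputable def Nop (β x₁ x₂ θ x y : ℝ) (f : ℝ → ℝ) : ℝ :=
  (1/2) * ∫ t in x₁..x₂, f t * (y ^ (θ - 1) * wright (-β) θ (-(|x - t| * y ^ (-β))))

/-!
Termwise differentiation of the Wright series gives `d/dz φ(-β, μ; z) = φ(-β, μ - β; z)`, so on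
`s ≥ 0` the kernel `K_θ(s) = y^(θ-1) φ(-β, θ; -|s| y^(-β))` satisfies `K_{δ+β}' = -K_δ`, and
`K_θ` is even. After exchanging the `x`- and `t`-integrals, every identity reduces to integrating
`K_δ` over `[a - t, a + l - t]`. When this interval lies on one side of `0` the integral is a
difference of two values of `K_{δ+β}`; in case (iii) it straddles `0`, and the kink of `K_{δ+β}`
there contributes `2 K_{δ+β}(0) = 2 y^(δ+β-1) / Γ(δ+β)`. The series converges for `0 < β < 1` by
the reflection formula and log-convexity of `Γ`.
-/

open Real Set Filter Topology MeasureTheory intervalIntegral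
open scoped Nat

namespace Real

theorem Gamma_add_le_mul_rpow {x b : ℝ} (hx : 0 < x) (hb0 : 0 < b) (hb1 : b < 1) :
    Gamma (x + b) ≤ Gamma x * x ^ b := by
  have hΓ := Gamma_pos_of_pos hx
  have h := Gamma_mul_add_mul_le_rpow_Gamma_mul_rpow_Gamma hx (by linarith : 0 < x + 1)
    (by linarith : 0 < 1 - b) hb0 (by ring)
  rwa [show (1 - b) * x + b * (x + 1) = x + b by ring, Gamma_add_one hx.ne',
    mul_rpow hx.le hΓ.le, mul_left_comm, ← rpow_add hΓ, sub_add_cancel, rpow_one,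
    mul_comm] at h

theorem inv_abs_Gamma_le {x : ℝ} (hx : x < 1) : |Gamma x|⁻¹ ≤ Gamma (1 - x) / π := by
  have hpos : 0 < Gamma (1 - x) := Gamma_pos_of_pos (by linarith)
  rcases eq_or_ne (Gamma x) 0 with h | h
  · rw [h, abs_zero, inv_zero]
    positivity
  have hrefl := Gamma_mul_Gamma_one_sub x
  have hsin : sin (π * x) ≠ 0 := fun h0 ↦ by
    rw [h0, div_zero] at hrefl
    exact mul_ne_zero h hpos.ne' hrefl
  calc |Gamma x|⁻¹ = Gamma (1 - x) / |Gamma x * Gamma (1 - x)| := by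
        rw [abs_mul, abs_of_pos hpos]
        field_simp
    _ = |sin (π * x)| * Gamma (1 - x) / π := by
        rw [hrefl, abs_div, abs_of_pos pi_pos]
        field_simp
    _ ≤ Gamma (1 - x) / π := by
        gcongr
        exact mul_le_of_le_one_left hpos.le (abs_sin_le_one _)

end Real

section Wright

variable {β : ℝ}

theorem summable_pow_mul_Gamma_div_factorial (hβ0 : 0 < β) (hβ1 : β < 1) {c R : ℝ} (hc : 0 < c)
    (hR : 0 ≤ R) : Summable fun k : ℕ ↦ R ^ k * Gamma (β * k + c) / k ! := by
  set a : ℕ → ℝ := fun k ↦ R ^ k * Gamma (β * k + c) / (k ! : ℝ)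
  have hx (k : ℕ) : 0 < β * k + c := by positivity
  have ha (k : ℕ) : 0 ≤ a k := by have := Gamma_pos_of_pos (hx k); positivity
  have hratio (k : ℕ) : a (k + 1) ≤ R * (β + c) * (β * k + c) ^ (β - 1) * a k := by
    have hΓ : Gamma (β * (k + 1 : ℕ) + c) ≤ Gamma (β * k + c) * (β * k + c) ^ β := by
      rw [show β * ((k + 1 : ℕ) : ℝ) + c = β * k + c + β by push_cast; ring]
      exact Gamma_add_le_mul_rpow (hx k) hβ0 hβ1
    have hpow : (β * k + c) ^ β ≤ (β + c) * (β * k + c) ^ (β - 1) * (k + 1) := by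
      have hlin : β * k + c ≤ (β + c) * (k + 1) := by nlinarith [k.cast_nonneg (α := ℝ)]
      calc (β * k + c) ^ β = (β * k + c) ^ (β - 1) * (β * k + c) := by
            rw [rpow_sub_one (hx k).ne']
            field_simp
        _ ≤ (β * k + c) ^ (β - 1) * ((β + c) * (k + 1)) := by gcongr
        _ = _ := by ring
    have hΓ0 := (Gamma_pos_of_pos (hx k)).le
    calc a (k + 1) = R ^ (k + 1) * Gamma (β * (k + 1 : ℕ) + c) / ((k + 1) * k !) := by
          simp only [a, Nat.factorial_succ]
          push_cast
          ring
      _ ≤ R ^ (k + 1) * (Gamma (β * k + c) * ((β + c) * (β * k + c) ^ (β - 1) * (k + 1))) /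
            ((k + 1) * k !) := by gcongr; exact hΓ.trans (by gcongr)
      _ = _ := by
          simp only [a]
          field_simp
          ring
  have hlim : Tendsto (fun k : ℕ ↦ R * (β + c) * (β * k + c) ^ (β - 1)) atTop (𝓝 0) := by
    have h1 : Tendsto (fun k : ℕ ↦ β * (k : ℝ) + c) atTop atTop :=
      tendsto_atTop_add_const_right _ c (tendsto_natCast_atTop_atTop.const_mul_atTop hβ0)
    have h2 := ((tendsto_rpow_neg_atTop (by linarith : 0 < 1 - β)).comp h1).const_mul (R * (β + c))
    simpa using h2
  refine summable_of_ratio_norm_eventually_le (r := 1 / 2) (by norm_num) ?_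
  filter_upwards [hlim.eventually (ge_mem_nhds (by norm_num : (0 : ℝ) < 1 / 2))] with k hk
  rw [norm_of_nonneg (ha _), norm_of_nonneg (ha _)]
  exact (hratio k).trans (mul_le_mul_of_nonneg_right hk (ha k))

theorem summable_pow_div_factorial_mul_abs_Gamma (hβ0 : 0 < β) (hβ1 : β < 1) (μ : ℝ) {R : ℝ}
    (hR : 0 ≤ R) : Summable fun k : ℕ ↦ R ^ k / (k ! * |Gamma (-β * k + μ)|) := by
  have hmaj := (summable_pow_mul_Gamma_div_factorial hβ0 hβ1
    (by positivity : 0 < |μ| + 1) hR).div_const π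
  refine hmaj.of_norm_bounded_eventually ?_
  rw [Nat.cofinite_eq_atTop]
  filter_upwards [(tendsto_natCast_atTop_atTop.const_mul_atTop hβ0).eventually_ge_atTop (μ + 1)]
    with k hk
  have h2 : 2 ≤ 1 - (-β * k + μ) := by linarith
  have hΓ : Gamma (1 - (-β * k + μ)) ≤ Gamma (β * k + (|μ| + 1)) :=
    Gamma_strictMonoOn_Ici.monotoneOn h2 (h2.trans (by linarith [neg_abs_le μ]))
      (by linarith [neg_abs_le μ])
  rw [norm_of_nonneg (by positivity)]
  calc R ^ k / (k ! * |Gamma (-β * k + μ)|) = R ^ k / k ! * |Gamma (-β * k + μ)|⁻¹ := by ring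
    _ ≤ R ^ k / k ! * (Gamma (β * k + (|μ| + 1)) / π) := by
        gcongr
        exact (inv_abs_Gamma_le (by linarith)).trans (by gcongr)
    _ = R ^ k * Gamma (β * k + (|μ| + 1)) / k ! / π := by ring

theorem summable_norm_wright_term (hβ0 : 0 < β) (hβ1 : β < 1) (μ z : ℝ) :
    Summable fun k : ℕ ↦ ‖z ^ k / (k ! * Gamma (-β * k + μ))‖ := by
  simpa only [norm_div, norm_mul, norm_pow, Real.norm_eq_abs, Nat.abs_cast] using
    summable_pow_div_factorial_mul_abs_Gamma hβ0 hβ1 μ (abs_nonneg z)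

theorem wright_zero (ρ μ : ℝ) : wright ρ μ 0 = (Gamma μ)⁻¹ := by
  rw [wright, tsum_eq_single 0 fun k hk ↦ by simp [zero_pow hk]]
  simp

theorem hasDerivAt_wright (hβ0 : 0 < β) (hβ1 : β < 1) (μ z : ℝ) :
    HasDerivAt (wright (-β) μ) (wright (-β) (μ - β) z) z := by
  set g' : ℕ → ℝ → ℝ := fun k w ↦ k * w ^ (k - 1) / (k ! * Gamma (-β * k + μ))
  have hshift (k : ℕ) (w : ℝ) : g' (k + 1) w = w ^ k / (k ! * Gamma (-β * k + (μ - β))) := by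
    simp only [g', Nat.factorial_succ, Nat.add_sub_cancel, Nat.cast_mul, Nat.cast_succ]
    rw [show -β * ((k : ℝ) + 1) + μ = -β * k + (μ - β) by ring, mul_assoc,
      mul_div_mul_left _ _ (by positivity)]
  set R := |z| + 1
  have hR : 0 ≤ R := by positivity
  have hu : Summable fun k ↦ ‖g' k R‖ := by
    refine (summable_nat_add_iff 1).mp ?_
    simpa only [hshift] using summable_norm_wright_term hβ0 hβ1 (μ - β) R
  have hbound (k : ℕ) (w : ℝ) (hw : w ∈ Ioo (-R) R) : ‖g' k w‖ ≤ ‖g' k R‖ := by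
    simp only [g', norm_div, norm_mul, norm_pow, Real.norm_eq_abs, abs_of_nonneg hR]
    gcongr
    exact abs_le.2 ⟨hw.1.le, hw.2.le⟩
  have hz : z ∈ Ioo (-R) R := ⟨by linarith [neg_abs_le z], by linarith [le_abs_self z]⟩
  have hderiv := hasDerivAt_tsum_of_isPreconnected hu isOpen_Ioo isPreconnected_Ioo
    (fun k w _ ↦ (hasDerivAt_pow k w).div_const (k ! * Gamma (-β * k + μ))) hbound hz
    (summable_norm_wright_term hβ0 hβ1 μ z).of_norm hz
  rw [(hu.of_norm_bounded fun k ↦ hbound k z hz).tsum_eq_zero_add] at hderiv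
  simp only [hshift, g', CharP.cast_eq_zero, zero_mul, zero_div, zero_add] at hderiv
  exact hderiv

theorem continuous_wright (hβ0 : 0 < β) (hβ1 : β < 1) (μ : ℝ) : Continuous (wright (-β) μ) :=
  continuous_iff_continuousAt.2 fun z ↦ (hasDerivAt_wright hβ0 hβ1 μ z).continuousAt

end Wright

noncomputable def wrightKernel (β θ y s : ℝ) : ℝ :=
  y ^ (θ - 1) * wright (-β) θ (-(|s| * y ^ (-β)))

theorem Nop_eq_integral_wrightKernel (β x₁ x₂ θ x y : ℝ) (f : ℝ → ℝ) :
    Nop β x₁ x₂ θ x y f = 1 / 2 * ∫ t in x₁..x₂, f t * wrightKernel β θ y (x - t) :=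
  rfl

section Kernel

variable {β y : ℝ}

theorem wrightKernel_neg (θ s : ℝ) : wrightKernel β θ y (-s) = wrightKernel β θ y s := by
  rw [wrightKernel, wrightKernel, abs_neg]

theorem wrightKernel_zero (θ : ℝ) : wrightKernel β θ y 0 = y ^ (θ - 1) / Gamma θ := by
  rw [wrightKernel, abs_zero, zero_mul, neg_zero, wright_zero, div_eq_mul_inv]

theorem continuous_wrightKernel (hβ0 : 0 < β) (hβ1 : β < 1) (θ : ℝ) :
    Continuous (wrightKernel β θ y) := by
  unfold wrightKernel
  have := continuous_wright hβ0 hβ1 θ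
  fun_prop

theorem integral_wrightKernel_of_nonneg (hβ0 : 0 < β) (hβ1 : β < 1) (hy : 0 < y) (δ : ℝ)
    {p q : ℝ} (hp : 0 ≤ p) (hq : 0 ≤ q) :
    ∫ s in p..q, wrightKernel β δ y s = wrightKernel β (δ + β) y p - wrightKernel β (δ + β) y q := by
  set G : ℝ → ℝ → ℝ := fun θ s ↦ y ^ (θ - 1) * wright (-β) θ (-(s * y ^ (-β)))
  have hG (θ : ℝ) {s : ℝ} (hs : 0 ≤ s) : wrightKernel β θ y s = G θ s := by
    rw [wrightKernel, abs_of_nonneg hs]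
  have hderiv (s : ℝ) : HasDerivAt (G (δ + β)) (-G δ s) s := by
    have h := (((hasDerivAt_wright hβ0 hβ1 (δ + β) (-(s * y ^ (-β)))).comp s
      ((hasDerivAt_mul_const (y ^ (-β))).neg)).const_mul (y ^ (δ + β - 1)))
    refine h.congr_deriv ?_
    simp only [G, add_sub_cancel_right]
    rw [show y ^ (δ - 1) = y ^ (δ + β - 1) * y ^ (-β) by
      rw [← rpow_add hy]; ring_nf]
    ring
  have hcont : Continuous fun s ↦ -G δ s := by
    have := continuous_wright hβ0 hβ1 δ
    fun_prop
  have hFTC := integral_eq_sub_of_hasDerivAt (fun s _ ↦ hderiv s) (hcont.intervalIntegrable p q)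
  rw [intervalIntegral.integral_neg] at hFTC
  rw [hG _ hp, hG _ hq, ← neg_sub, ← hFTC, neg_neg]
  refine integral_congr fun s hs ↦ hG δ ?_
  exact (le_min hp hq).trans hs.1

theorem integral_wrightKernel_of_nonpos (hβ0 : 0 < β) (hβ1 : β < 1) (hy : 0 < y) (δ : ℝ)
    {p q : ℝ} (hp : p ≤ 0) (hq : q ≤ 0) :
    ∫ s in p..q, wrightKernel β δ y s = wrightKernel β (δ + β) y q - wrightKernel β (δ + β) y p := by
  calc ∫ s in p..q, wrightKernel β δ y s = ∫ s in p..q, wrightKernel β δ y (-s) := by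
        simp only [wrightKernel_neg]
    _ = ∫ s in -q..-p, wrightKernel β δ y s := integral_comp_neg _
    _ = _ := by
        rw [integral_wrightKernel_of_nonneg hβ0 hβ1 hy δ (neg_nonneg.2 hq) (neg_nonneg.2 hp),
          wrightKernel_neg, wrightKernel_neg]

theorem integral_wrightKernel_of_nonpos_of_nonneg (hβ0 : 0 < β) (hβ1 : β < 1) (hy : 0 < y) (δ : ℝ)
    {p q : ℝ} (hp : p ≤ 0) (hq : 0 ≤ q) :
    ∫ s in p..q, wrightKernel β δ y s =
      2 * wrightKernel β (δ + β) y 0 - wrightKernel β (δ + β) y p - wrightKernel β (δ + β) y q := by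
  have hK := continuous_wrightKernel (y := y) hβ0 hβ1 δ
  rw [← integral_add_adjacent_intervals (hK.intervalIntegrable p 0) (hK.intervalIntegrable 0 q),
    integral_wrightKernel_of_nonpos hβ0 hβ1 hy δ hp le_rfl,
    integral_wrightKernel_of_nonneg hβ0 hβ1 hy δ le_rfl hq]
  ring

end Kernel

theorem integral_integral_mul_comp_add_sub {f g : ℝ → ℝ} {l : ℝ} (hl : 0 ≤ l)
    (hf : ContinuousOn f (Icc 0 l)) (hg : Continuous g) (a : ℝ) :
    ∫ x in 0..l, ∫ t in 0..l, f t * g (a + x - t) =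
      ∫ t in 0..l, f t * ∫ s in a - t..a + l - t, g s := by
  have hint : IntegrableOn (fun p : ℝ × ℝ ↦ f p.2 * g (a + p.1 - p.2)) (Icc 0 l ×ˢ Icc 0 l) :=
    ContinuousOn.integrableOn_compact (isCompact_Icc.prod isCompact_Icc)
      ((hf.comp continuous_snd.continuousOn fun p hp ↦ hp.2).mul (by fun_prop))
  have hswap : ∫ x in 0..l, ∫ t in 0..l, f t * g (a + x - t) =
      ∫ t in 0..l, ∫ x in 0..l, f t * g (a + x - t) := by
    simp only [integral_of_le hl]
    refine integral_integral_swap ?_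
    rw [Measure.prod_restrict]
    exact hint.mono_set (prod_mono Ioc_subset_Icc_self Ioc_subset_Icc_self)
  rw [hswap]
  refine integral_congr fun t _ ↦ ?_
  rw [intervalIntegral.integral_const_mul]
  congr 1
  simp only [add_sub_right_comm a _ t]
  rw [integral_comp_add_left, add_zero, sub_add_eq_add_sub]

section Nop

variable {β y l : ℝ} {τ : ℝ → ℝ}

theorem integral_Nop_add (hβ0 : 0 < β) (hβ1 : β < 1) (δ : ℝ) (hl : 0 ≤ l)
    (hτ : ContinuousOn τ (Icc 0 l)) (a : ℝ) :
    ∫ x in 0..l, Nop β 0 l δ (a + x) y τ =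
      1 / 2 * ∫ t in 0..l, τ t * ∫ s in a - t..a + l - t, wrightKernel β δ y s := by
  simp only [Nop_eq_integral_wrightKernel, intervalIntegral.integral_const_mul]
  rw [integral_integral_mul_comp_add_sub hl hτ (continuous_wrightKernel hβ0 hβ1 δ)]

theorem intervalIntegrable_mul_wrightKernel (hβ0 : 0 < β) (hβ1 : β < 1) (hl : 0 ≤ l)
    (hτ : ContinuousOn τ (Icc 0 l)) (θ x : ℝ) :
    IntervalIntegrable (fun t ↦ τ t * wrightKernel β θ y (x - t)) volume 0 l := by
  refine ContinuousOn.intervalIntegrable ?_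
  rw [uIcc_of_le hl]
  exact hτ.mul ((continuous_wrightKernel hβ0 hβ1 θ).comp (continuous_sub_left x)).continuousOn

theorem integral_Nop_add_of_forall (hβ0 : 0 < β) (hβ1 : β < 1) (δ : ℝ) (hl : 0 ≤ l)
    (hτ : ContinuousOn τ (Icc 0 l)) {a u v : ℝ}
    (h : ∀ t ∈ Icc 0 l, ∫ s in a - t..a + l - t, wrightKernel β δ y s =
      wrightKernel β (δ + β) y (u - t) - wrightKernel β (δ + β) y (v - t)) :
    ∫ x in 0..l, Nop β 0 l δ (a + x) y τ =
      Nop β 0 l (δ + β) u y τ - Nop β 0 l (δ + β) v y τ := by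
  rw [integral_Nop_add hβ0 hβ1 δ hl hτ, Nop_eq_integral_wrightKernel,
    Nop_eq_integral_wrightKernel, ← mul_sub, ← integral_sub
      (intervalIntegrable_mul_wrightKernel hβ0 hβ1 hl hτ _ _)
      (intervalIntegrable_mul_wrightKernel hβ0 hβ1 hl hτ _ _)]
  congr 1
  refine integral_congr fun t ht ↦ ?_
  rw [h t (uIcc_of_le hl ▸ ht), mul_sub]

theorem integral_Nop_add_of_le (hβ0 : 0 < β) (hβ1 : β < 1) (hy : 0 < y) (δ : ℝ)
    (hl : 0 ≤ l) (hτ : ContinuousOn τ (Icc 0 l)) {a : ℝ} (ha : l ≤ a) :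
    ∫ x in 0..l, Nop β 0 l δ (a + x) y τ =
      Nop β 0 l (δ + β) a y τ - Nop β 0 l (δ + β) (a + l) y τ :=
  integral_Nop_add_of_forall hβ0 hβ1 δ hl hτ fun t ht ↦ by
    rw [integral_wrightKernel_of_nonneg hβ0 hβ1 hy δ (by linarith [ht.2]) (by linarith [ht.2]),
      add_sub_right_comm]

theorem integral_Nop_add_of_le_neg (hβ0 : 0 < β) (hβ1 : β < 1) (hy : 0 < y) (δ : ℝ)
    (hl : 0 ≤ l) (hτ : ContinuousOn τ (Icc 0 l)) {a : ℝ} (ha : a ≤ -l) :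
    ∫ x in 0..l, Nop β 0 l δ (a + x) y τ =
      Nop β 0 l (δ + β) (a + l) y τ - Nop β 0 l (δ + β) a y τ :=
  integral_Nop_add_of_forall hβ0 hβ1 δ hl hτ fun t ht ↦ by
    rw [integral_wrightKernel_of_nonpos hβ0 hβ1 hy δ (by linarith [ht.1]) (by linarith [ht.1]),
      add_sub_right_comm]

theorem integral_Nop_id (hβ0 : 0 < β) (hβ1 : β < 1) (hy : 0 < y) (δ : ℝ)
    (hl : 0 ≤ l) (hτ : ContinuousOn τ (Icc 0 l)) :
    ∫ x in 0..l, Nop β 0 l δ x y τ =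
      -(Nop β 0 l (δ + β) 0 y τ + Nop β 0 l (δ + β) l y τ) +
        y ^ (δ + β - 1) / Gamma (δ + β) * ∫ x in 0..l, τ x := by
  have h := integral_Nop_add (y := y) hβ0 hβ1 δ hl hτ 0
  simp only [zero_add, zero_sub] at h
  have hinner : ∀ t ∈ uIcc 0 l, τ t * ∫ s in -t..l - t, wrightKernel β δ y s =
      2 * wrightKernel β (δ + β) y 0 * τ t - τ t * wrightKernel β (δ + β) y (0 - t) -
        τ t * wrightKernel β (δ + β) y (l - t) := fun t ht ↦ by
    rw [uIcc_of_le hl] at ht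
    rw [integral_wrightKernel_of_nonpos_of_nonneg hβ0 hβ1 hy δ (by linarith [ht.1])
      (by linarith [ht.2]), zero_sub]
    ring
  have hτint : IntervalIntegrable τ volume 0 l := (uIcc_of_le hl ▸ hτ).intervalIntegrable
  have hK := intervalIntegrable_mul_wrightKernel (y := y) hβ0 hβ1 hl hτ (δ + β)
  rw [h, integral_congr hinner, integral_sub ((hτint.const_mul _).sub (hK 0)) (hK l),
    integral_sub (hτint.const_mul _) (hK 0),
    intervalIntegral.integral_const_mul, Nop_eq_integral_wrightKernel,
    Nop_eq_integral_wrightKernel, wrightKernel_zero]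
  ring

end Nop

theorem integral_comp_sub_eq_integral_comp_add (f : ℝ → ℝ) (a l : ℝ) :
    ∫ x in 0..l, f (a - x) = ∫ x in 0..l, f (a - l + x) := by
  rw [integral_comp_sub_left, integral_comp_add_left, sub_zero, add_zero, sub_add_cancel]

/-- Property 6: for `0 < β < 1`, `0 < l`, real `δ`, continuous `τ` on `[0,l]`, and `y > 0`:
(i) for `|a| ≥ 2l`, `∫₀^l 𝓝_{0l}^{δ,a±x,y} τ dx =
  ± sign(a) [𝓝_{0l}^{δ+β,a,y} τ − 𝓝_{0l}^{δ+β,a±l,y} τ]`;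
(ii) `∫₀^l 𝓝_{0l}^{δ,-x,y} τ dx = 𝓝_{0l}^{δ+β,0,y} τ − 𝓝_{0l}^{δ+β,-l,y} τ`;
(iii) `∫₀^l 𝓝_{0l}^{δ,x,y} τ dx = −[𝓝_{0l}^{δ+β,0,y} τ + 𝓝_{0l}^{δ+β,l,y} τ]
  + (y^{δ+β-1}/Γ(δ+β)) ∫₀^l τ`. -/
theorem Nop_x_integral (β l δ : ℝ) (hβ0 : 0 < β) (hβ1 : β < 1) (hl : 0 < l)
    (τ : ℝ → ℝ) (hτ : ContinuousOn τ (Set.Icc 0 l)) :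
    ∀ y : ℝ, 0 < y →
      (∀ a : ℝ, 2 * l ≤ |a| →
        (∫ x in (0:ℝ)..l, Nop β 0 l δ (a + x) y τ) =
          Real.sign a * (Nop β 0 l (δ + β) a y τ - Nop β 0 l (δ + β) (a + l) y τ) ∧
        (∫ x in (0:ℝ)..l, Nop β 0 l δ (a - x) y τ) =
          -Real.sign a * (Nop β 0 l (δ + β) a y τ - Nop β 0 l (δ + β) (a - l) y τ)) ∧
      ((∫ x in (0:ℝ)..l, Nop β 0 l δ (-x) y τ) =
        Nop β 0 l (δ + β) 0 y τ - Nop β 0 l (δ + β) (-l) y τ) ∧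
      ((∫ x in (0:ℝ)..l, Nop β 0 l δ x y τ) =
        -(Nop β 0 l (δ + β) 0 y τ + Nop β 0 l (δ + β) l y τ) +
          y ^ (δ + β - 1) / Real.Gamma (δ + β) * ∫ x in (0:ℝ)..l, τ x) := by
  intro y hy
  have hl' := hl.le
  have hNop_sub (a : ℝ) : ∫ x in (0:ℝ)..l, Nop β 0 l δ (a - x) y τ =
      ∫ x in (0:ℝ)..l, Nop β 0 l δ (a - l + x) y τ :=
    integral_comp_sub_eq_integral_comp_add (fun x ↦ Nop β 0 l δ x y τ) a l
  refine ⟨fun a ha ↦ ?_, ?_, integral_Nop_id hβ0 hβ1 hy δ hl' hτ⟩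
  · rcases le_abs.1 ha with ha | ha
    · rw [sign_of_pos (by linarith), hNop_sub, integral_Nop_add_of_le hβ0 hβ1 hy δ hl' hτ
        (by linarith), integral_Nop_add_of_le hβ0 hβ1 hy δ hl' hτ (by linarith), sub_add_cancel]
      constructor <;> ring
    · rw [sign_of_neg (by linarith), hNop_sub, integral_Nop_add_of_le_neg hβ0 hβ1 hy δ hl' hτ
        (by linarith), integral_Nop_add_of_le_neg hβ0 hβ1 hy δ hl' hτ (by linarith),
        sub_add_cancel]
      constructor <;> ring
  · have h := integral_Nop_add_of_le_neg hβ0 hβ1 hy δ hl' hτ (le_refl (-l))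
    rw [neg_add_cancel, ← zero_sub, ← hNop_sub] at h
    simpa only [zero_sub] using h
end

section
/- Let u be a C² solution of the wave equation u_{xx} − u_{yy} = 0 in the rectangle (0,l) × (0,T) with T > l, continuous together with u_x and u_y up to the boundary, with initial traces τ₁(x) = u_y(x,0) and τ₂(x) = u(x,0) entering as in the α → 2 limit. Then for all y with l ≤ y ≤ T: u(0,y) = ∫₀^l τ₁(t) dt + ∫₀^{y-l} u_x(l,s) ds − ∫₀^y u_x(0,s) ds + u(l, y-l), and u(l,y) = ∫₀^l τ₁(t) dt − ∫₀^{y-l} u_x(0,s) ds + ∫₀^y u_x(l,s) ds + u(0, y-l). -/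
/-!
For a classical solution of `u_xx = u_yy` the Riemann invariants `u_x - ε u_y` (`ε = ±1`) have
zero derivative along the characteristics `x' - x = ε (y' - y)`, because the second derivative
of `u` is symmetric; by continuity they stay constant up to the boundary of the rectangle.
Take `w = u_x + u_y` and integrate it along the left wall from `0` to `y`. On `[0, l]` it equals
`w` on the bottom edge and on `[l, y]` it equals `w` on the right wall shifted down by `l`;
the fundamental theorem of calculus on each of these three segments (extended from interior
lines to the boundary by continuity) turns the integrals of `w` into the first identity.
The second identity is the first one for the reflected solution `u (l - x) y`.
-/

open Set Topology intervalIntegral MeasureTheory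
open Function (uncurry)

section Calculus

variable {E F : Type*} [NormedAddCommGroup E] [NormedSpace ℝ E] [NormedAddCommGroup F]
  [NormedSpace ℝ F] {f : E → F} {U : Set E} {p : E}

theorem ContDiffOn.differentiableAt_fderiv (hf : ContDiffOn ℝ 2 f U)
    (hU : IsOpen U) (hp : p ∈ U) : DifferentiableAt ℝ (fderiv ℝ f) p :=
  ((hf.contDiffAt (hU.mem_nhds hp)).fderiv_right (m := 1) le_rfl).differentiableAt one_ne_zero

theorem hasDerivAt_fderiv_apply_comp {γ : ℝ → E} {v w : E} {s : ℝ} (hγ : HasDerivAt γ v s)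
    (hf : DifferentiableAt ℝ (fderiv ℝ f) (γ s)) :
    HasDerivAt (fun r => fderiv ℝ f (γ r) w) (fderiv ℝ (fderiv ℝ f) (γ s) v w) s := by
  simpa using (hf.hasFDerivAt.comp_hasDerivAt s hγ).clm_apply (hasDerivAt_const s w)

noncomputable def riemannInvariant (u : ℝ → ℝ → ℝ) (ε x y : ℝ) : ℝ :=
  deriv (fun t => u t y) x - ε * deriv (u x) y

section WaveCalculus

variable {u : ℝ → ℝ → ℝ} {U : Set (ℝ × ℝ)} {x y : ℝ}

theorem hasDerivAt_fst_of_differentiableAt (h : DifferentiableAt ℝ (uncurry u) (x, y)) :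
    HasDerivAt (fun t => u t y) (fderiv ℝ (uncurry u) (x, y) (1, 0)) x :=
  (h.hasFDerivAt.comp_hasDerivAt x ((hasDerivAt_id x).prodMk (hasDerivAt_const x y)) :)

theorem hasDerivAt_snd_of_differentiableAt (h : DifferentiableAt ℝ (uncurry u) (x, y)) :
    HasDerivAt (u x) (fderiv ℝ (uncurry u) (x, y) (0, 1)) y :=
  (h.hasFDerivAt.comp_hasDerivAt y ((hasDerivAt_const y x).prodMk (hasDerivAt_id y)) :)

variable (hU : IsOpen U) (hu : ContDiffOn ℝ 2 (uncurry u) U)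
include hU hu

theorem deriv_deriv_fst_eq (hp : (x, y) ∈ U) :
    deriv (deriv fun t => u t y) x = fderiv ℝ (fderiv ℝ (uncurry u)) (x, y) (1, 0) (1, 0) := by
  have hev : (deriv fun t => u t y) =ᶠ[𝓝 x] fun t => fderiv ℝ (uncurry u) (t, y) (1, 0) := by
    filter_upwards [(hU.preimage (by fun_prop : Continuous fun t : ℝ => (t, y))).mem_nhds hp]
      with t ht
    exact (hasDerivAt_fst_of_differentiableAt
      ((hu.contDiffAt (hU.mem_nhds ht)).differentiableAt two_ne_zero)).deriv
  rw [hev.deriv_eq]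
  exact (hasDerivAt_fderiv_apply_comp ((hasDerivAt_id x).prodMk (hasDerivAt_const x y))
    (hu.differentiableAt_fderiv hU hp)).deriv

theorem deriv_deriv_snd_eq (hp : (x, y) ∈ U) :
    deriv (deriv (u x)) y = fderiv ℝ (fderiv ℝ (uncurry u)) (x, y) (0, 1) (0, 1) := by
  have hev : deriv (u x) =ᶠ[𝓝 y] fun s => fderiv ℝ (uncurry u) (x, s) (0, 1) := by
    filter_upwards [(hU.preimage (by fun_prop : Continuous fun s : ℝ => (x, s))).mem_nhds hp]
      with s hs
    exact (hasDerivAt_snd_of_differentiableAt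
      ((hu.contDiffAt (hU.mem_nhds hs)).differentiableAt two_ne_zero)).deriv
  rw [hev.deriv_eq]
  exact (hasDerivAt_fderiv_apply_comp ((hasDerivAt_const y x).prodMk (hasDerivAt_id y))
    (hu.differentiableAt_fderiv hU hp)).deriv

theorem hasDerivAt_riemannInvariant_comp {ε s : ℝ} (hε : ε ^ 2 = 1)
    (hs : (x + s * ε, y + s) ∈ U)
    (hwave : deriv (deriv fun t => u t (y + s)) (x + s * ε) =
      deriv (deriv (u (x + s * ε))) (y + s)) :
    HasDerivAt (fun r => riemannInvariant u ε (x + r * ε) (y + r)) 0 s := by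
  set F := fderiv ℝ (uncurry u)
  set H := fderiv ℝ F (x + s * ε, y + s)
  have hγ : HasDerivAt (fun r => (x + r * ε, y + r)) (ε, 1) s :=
    ((hasDerivAt_mul_const ε).const_add x).prodMk ((hasDerivAt_id s).const_add y)
  have hF := hu.differentiableAt_fderiv hU hs
  have hev : (fun r => riemannInvariant u ε (x + r * ε) (y + r)) =ᶠ[𝓝 s]
      fun r => F (x + r * ε, y + r) (1, 0) - ε * F (x + r * ε, y + r) (0, 1) := by
    filter_upwards [hγ.continuousAt.preimage_mem_nhds (hU.mem_nhds hs)] with r hr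
    have hd := (hu.contDiffAt (hU.mem_nhds hr)).differentiableAt two_ne_zero
    rw [riemannInvariant, (hasDerivAt_fst_of_differentiableAt hd).deriv,
      (hasDerivAt_snd_of_differentiableAt hd).deriv]
  have hsymm : H (0, 1) (1, 0) = H (1, 0) (0, 1) :=
    (hu.contDiffAt (hU.mem_nhds hs)).isSymmSndFDerivAt (by simp) _ _
  have hwave' : H (1, 0) (1, 0) = H (0, 1) (0, 1) := by
    rwa [deriv_deriv_fst_eq hU hu hs, deriv_deriv_snd_eq hU hu hs] at hwave
  refine (((hasDerivAt_fderiv_apply_comp hγ hF).sub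
    ((hasDerivAt_fderiv_apply_comp hγ hF).const_mul ε)).congr_of_eventuallyEq hev).congr_deriv ?_
  have hdir : ((ε, 1) : ℝ × ℝ) = ε • ((1 : ℝ), (0 : ℝ)) + ((0 : ℝ), (1 : ℝ)) := by
    simp
  rw [hdir, map_add, map_smul, add_apply, smul_apply, smul_eq_mul, add_apply, smul_apply,
    smul_eq_mul]
  -- the derivative is `ε (u_xx - u_yy) + (1 - ε²) u_xy`
  linear_combination ε * hwave' + hsymm - H (1, 0) (0, 1) * hε

theorem riemannInvariant_eq_of_continuousOn {ε d : ℝ} (hε : ε ^ 2 = 1)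
    (hwave : ∀ p ∈ U, deriv (deriv fun t => u t p.2) p.1 = deriv (deriv (u p.1)) p.2)
    (hd : 0 ≤ d) (hmem : ∀ s ∈ Ioo 0 d, (x + s * ε, y + s) ∈ U)
    (hcont : ContinuousOn (fun s => riemannInvariant u ε (x + s * ε) (y + s)) (Icc 0 d)) :
    riemannInvariant u ε (x + d * ε) (y + d) = riemannInvariant u ε x y := by
  rcases hd.eq_or_lt with rfl | hd
  · simp
  obtain ⟨c, -, hc⟩ := exists_hasDerivAt_eq_slope _ (fun _ => 0) hd hcont fun s hs =>
    hasDerivAt_riemannInvariant_comp hU hu hε (hmem s hs) (hwave _ (hmem s hs))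
  rw [eq_comm, div_eq_zero_iff, sub_eq_zero, sub_eq_zero] at hc
  simpa using hc.resolve_right hd.ne'

end WaveCalculus

section Rectangle

variable {u G : ℝ → ℝ → ℝ} {a b c d x y s t : ℝ}

theorem ContinuousOn.intervalIntegrable_snd_of_prod
    (hG : ContinuousOn (uncurry G) (Icc a b ×ˢ Icc c d))
    (hx : x ∈ Icc a b) (hs : s ∈ Icc c d) (ht : t ∈ Icc c d) :
    IntervalIntegrable (G x) volume s t :=
  (hG.comp (by fun_prop : Continuous fun r => (x, r)).continuousOn
    fun _ hr => ⟨hx, uIcc_subset_Icc hs ht hr⟩).intervalIntegrable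

theorem ContinuousOn.intervalIntegrable_fst_of_prod
    (hG : ContinuousOn (uncurry G) (Icc a b ×ˢ Icc c d)) (hy : y ∈ Icc c d) (hs : s ∈ Icc a b)
    (ht : t ∈ Icc a b) : IntervalIntegrable (fun x => G x y) volume s t :=
  (hG.comp (by fun_prop : Continuous fun r => (r, y)).continuousOn
    fun _ hr => ⟨uIcc_subset_Icc hs ht hr, hy⟩).intervalIntegrable

theorem ContinuousOn.continuousOn_intervalIntegral_snd_of_prod
    (hG : ContinuousOn (uncurry G) (Icc a b ×ˢ Icc c d))
    (hs : s ∈ Icc c d) (ht : t ∈ Icc c d) :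
    ContinuousOn (fun x => ∫ r in s..t, G x r) (Icc a b) := by
  rcases lt_or_ge b a with hba | hab
  · simp [Icc_eq_empty_of_lt hba]
  have hcd : c ≤ d := hs.1.trans hs.2
  -- clamping into the rectangle extends `G` continuously to the whole plane
  have hext : Continuous (uncurry fun x r => G (projIcc a b hab x) (projIcc c d hcd r)) :=
    hG.comp_continuous
      (f := fun p : ℝ × ℝ => ((projIcc a b hab p.1 : ℝ), (projIcc c d hcd p.2 : ℝ)))
      (by fun_prop) fun p => ⟨(projIcc a b hab p.1).2, (projIcc c d hcd p.2).2⟩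
  refine (continuous_parametric_intervalIntegral_of_continuous' hext s t).continuousOn.congr
    fun x hx => integral_congr fun r hr => ?_
  simp [projIcc_of_mem hab hx, projIcc_of_mem hcd (uIcc_subset_Icc hs ht hr)]

theorem sub_eq_integral_of_continuousOn_prod (hab : a < b)
    (hu : ContinuousOn (uncurry u) (Icc a b ×ˢ Icc c d))
    (hG : ContinuousOn (uncurry G) (Icc a b ×ˢ Icc c d))
    (hderiv : ∀ x ∈ Ioo a b, ∀ r ∈ Ioo c d, HasDerivAt (u x) (G x r) r)
    (hx : x ∈ Icc a b) (hs : s ∈ Icc c d) (ht : t ∈ Icc c d) :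
    u x t - u x s = ∫ r in s..t, G x r := by
  have hline : ∀ r ∈ Icc c d, ContinuousOn (fun x => u x r) (Icc a b) := fun r hr =>
    hu.comp (by fun_prop : Continuous fun x => (x, r)).continuousOn fun _ hx => ⟨hx, hr⟩
  refine EqOn.of_subset_closure (s := Ioo a b) (fun x hx => ?_) ((hline t ht).sub (hline s hs))
    (hG.continuousOn_intervalIntegral_snd_of_prod hs ht) Ioo_subset_Icc_self
    (closure_Ioo hab.ne).ge hx
  refine (integral_eq_sub_of_hasDeriv_right ?_ (fun r hr => ?_)
    (hG.intervalIntegrable_snd_of_prod (Ioo_subset_Icc_self hx) hs ht)).symm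
  · exact hu.comp (by fun_prop : Continuous fun r => (x, r)).continuousOn
      fun _ hr => ⟨Ioo_subset_Icc_self hx, uIcc_subset_Icc hs ht hr⟩
  · have hr' : r ∈ Ioo c d :=
      ⟨(le_min hs.1 ht.1).trans_lt hr.1, hr.2.trans_le (max_le hs.2 ht.2)⟩
    exact (hderiv x hx r hr').hasDerivWithinAt

end Rectangle

/-- On the boundary, `deriv` sees values of `u` outside the rectangle; the continuity fields make
the boundary values of `u_x` and `u_y` the limits of the interior ones. -/
structure IsClassicalWaveSolution (u : ℝ → ℝ → ℝ) (l T : ℝ) : Prop where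
  contDiffOn : ContDiffOn ℝ 2 (uncurry u) (Ioo 0 l ×ˢ Ioo 0 T)
  continuousOn : ContinuousOn (uncurry u) (Icc 0 l ×ˢ Icc 0 T)
  continuousOn_deriv_fst :
    ContinuousOn (uncurry fun x y => deriv (fun t => u t y) x) (Icc 0 l ×ˢ Icc 0 T)
  continuousOn_deriv_snd : ContinuousOn (uncurry fun x y => deriv (u x) y) (Icc 0 l ×ˢ Icc 0 T)
  wave : ∀ x ∈ Ioo 0 l, ∀ y ∈ Ioo 0 T,
    deriv (deriv fun t => u t y) x = deriv (deriv (u x)) y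

namespace IsClassicalWaveSolution

variable {u : ℝ → ℝ → ℝ} {l T x y a b ε : ℝ} (hw : IsClassicalWaveSolution u l T)
include hw

theorem differentiableAt {p : ℝ × ℝ} (hp : p ∈ Ioo 0 l ×ˢ Ioo 0 T) :
    DifferentiableAt ℝ (uncurry u) p :=
  (hw.contDiffOn.contDiffAt ((isOpen_Ioo.prod isOpen_Ioo).mem_nhds hp)).differentiableAt
    two_ne_zero

theorem hasDerivAt_deriv_fst (hx : x ∈ Ioo 0 l) (hy : y ∈ Ioo 0 T) :
    HasDerivAt (fun t => u t y) (deriv (fun t => u t y) x) x :=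
  (hasDerivAt_fst_of_differentiableAt
    (hw.differentiableAt ⟨hx, hy⟩)).differentiableAt.hasDerivAt

theorem hasDerivAt_deriv_snd (hx : x ∈ Ioo 0 l) (hy : y ∈ Ioo 0 T) :
    HasDerivAt (u x) (deriv (u x) y) y :=
  (hasDerivAt_snd_of_differentiableAt
    (hw.differentiableAt ⟨hx, hy⟩)).differentiableAt.hasDerivAt

theorem reflect : IsClassicalWaveSolution (fun x y => u (l - x) y) l T := by
  have hIcc : ∀ x ∈ Icc 0 l, l - x ∈ Icc 0 l := fun x hx =>
    ⟨by linarith [hx.2], by linarith [hx.1]⟩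
  have hIoo : ∀ x ∈ Ioo 0 l, l - x ∈ Ioo 0 l := fun x hx =>
    ⟨by linarith [hx.2], by linarith [hx.1]⟩
  have hmaps : ∀ {S : Set ℝ}, (∀ x ∈ S, l - x ∈ S) → ∀ V : Set ℝ,
      MapsTo (fun p : ℝ × ℝ => (l - p.1, p.2)) (S ×ˢ V) (S ×ˢ V) :=
    fun hS _ p hp => ⟨hS _ hp.1, hp.2⟩
  have hcont : Continuous fun p : ℝ × ℝ => (l - p.1, p.2) := by fun_prop
  refine ⟨hw.contDiffOn.comp (by fun_prop) (hmaps hIoo _),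
    hw.continuousOn.comp hcont.continuousOn (hmaps hIcc _), ?_,
    hw.continuousOn_deriv_snd.comp hcont.continuousOn (hmaps hIcc _), fun x hx y hy => ?_⟩
  · exact (hw.continuousOn_deriv_fst.comp hcont.continuousOn (hmaps hIcc _)).neg.congr
      fun p _ => deriv_comp_const_sub (fun t => u t p.2) l p.1
  · have hderiv : (deriv fun t => u (l - t) y) = fun t => -deriv (fun t => u t y) (l - t) :=
      funext (deriv_comp_const_sub (fun t => u t y) l)
    rw [hderiv, deriv.fun_neg, deriv_comp_const_sub, neg_neg]
    exact hw.wave _ (hIoo x hx) y hy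

theorem sub_eq_integral_deriv_snd (hl : 0 < l) (hx : x ∈ Icc 0 l) (ha : a ∈ Icc 0 T)
    (hb : b ∈ Icc 0 T) : u x b - u x a = ∫ s in a..b, deriv (u x) s :=
  sub_eq_integral_of_continuousOn_prod hl hw.continuousOn hw.continuousOn_deriv_snd
    (fun _ hx _ hs => hw.hasDerivAt_deriv_snd hx hs) hx ha hb

theorem sub_eq_integral_deriv_fst (hT : 0 < T) (hy : y ∈ Icc 0 T) (ha : a ∈ Icc 0 l)
    (hb : b ∈ Icc 0 l) : u b y - u a y = ∫ t in a..b, deriv (fun t => u t y) t :=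
  sub_eq_integral_of_continuousOn_prod (u := fun y x => u x y)
    (G := fun y x => deriv (fun t => u t y) x) hT
    (hw.continuousOn.comp continuous_swap.continuousOn fun _ hp => ⟨hp.2, hp.1⟩)
    (hw.continuousOn_deriv_fst.comp continuous_swap.continuousOn fun _ hp => ⟨hp.2, hp.1⟩)
    (fun _ hy _ hx => hw.hasDerivAt_deriv_fst hx hy) hy ha hb

theorem continuousOn_riemannInvariant :
    ContinuousOn (uncurry (riemannInvariant u ε)) (Icc 0 l ×ˢ Icc 0 T) :=
  hw.continuousOn_deriv_fst.sub (continuousOn_const.mul hw.continuousOn_deriv_snd)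

theorem riemannInvariant_eq_of_mem_characteristic {x' y' : ℝ} (hε : ε = 1 ∨ ε = -1)
    (hp : (x, y) ∈ Icc 0 l ×ˢ Icc 0 T) (hq : (x', y') ∈ Icc 0 l ×ˢ Icc 0 T)
    (hyy' : y ≤ y') (hchar : x' - x = ε * (y' - y)) :
    riemannInvariant u ε x' y' = riemannInvariant u ε x y := by
  obtain ⟨d, hd, rfl, rfl⟩ : ∃ d, 0 ≤ d ∧ x' = x + d * ε ∧ y' = y + d :=
    ⟨y' - y, sub_nonneg.2 hyy', by linarith, by ring⟩
  obtain ⟨⟨hx₀, hxl⟩, hy₀, hyT⟩ := hp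
  obtain ⟨⟨hx₀', hxl'⟩, hy₀', hyT'⟩ := hq
  refine riemannInvariant_eq_of_continuousOn (isOpen_Ioo.prod isOpen_Ioo) hw.contDiffOn
    (by rcases hε with rfl | rfl <;> norm_num) (fun p hp => hw.wave _ hp.1 _ hp.2) hd
    (fun s hs => ?_) (hw.continuousOn_riemannInvariant.comp
      (by fun_prop : Continuous fun s => (x + s * ε, y + s)).continuousOn fun s hs => ?_)
  · obtain ⟨hs₀, hsd⟩ := hs
    rcases hε with rfl | rfl <;> refine ⟨⟨?_, ?_⟩, ?_, ?_⟩ <;> linarith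
  · obtain ⟨hs₀, hsd⟩ := hs
    rcases hε with rfl | rfl <;> refine ⟨⟨?_, ?_⟩, ?_, ?_⟩ <;> linarith

theorem integral_riemannInvariant_snd (hl : 0 < l) (hx : x ∈ Icc 0 l) (ha : a ∈ Icc 0 T)
    (hb : b ∈ Icc 0 T) :
    ∫ s in a..b, riemannInvariant u ε x s =
      (∫ s in a..b, deriv (fun t => u t s) x) - ε * (u x b - u x a) := by
  rw [hw.sub_eq_integral_deriv_snd hl hx ha hb, ← intervalIntegral.integral_const_mul,
    ← intervalIntegral.integral_sub]
  · rfl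
  · exact hw.continuousOn_deriv_fst.intervalIntegrable_snd_of_prod hx ha hb
  · exact (hw.continuousOn_deriv_snd.intervalIntegrable_snd_of_prod hx ha hb).const_mul ε

theorem integral_riemannInvariant_fst (hT : 0 < T) (hy : y ∈ Icc 0 T) (ha : a ∈ Icc 0 l)
    (hb : b ∈ Icc 0 l) :
    ∫ t in a..b, riemannInvariant u ε t y =
      (u b y - u a y) - ε * ∫ t in a..b, deriv (u t) y := by
  rw [hw.sub_eq_integral_deriv_fst hT hy ha hb, ← intervalIntegral.integral_const_mul,
    ← intervalIntegral.integral_sub]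
  · rfl
  · exact hw.continuousOn_deriv_fst.intervalIntegrable_fst_of_prod hy ha hb
  · exact (hw.continuousOn_deriv_snd.intervalIntegrable_fst_of_prod hy ha hb).const_mul ε

theorem left_boundary_eq (hl : 0 < l) (hly : l ≤ y) (hyT : y ≤ T) :
    u 0 y = (∫ t in (0:ℝ)..l, deriv (u t) 0) +
      (∫ s in (0:ℝ)..(y - l), deriv (fun t => u t s) l) -
      (∫ s in (0:ℝ)..y, deriv (fun t => u t s) 0) + u l (y - l) := by
  have hT : 0 < T := hl.trans_le (hly.trans hyT)
  have h0l : (0:ℝ) ∈ Icc 0 l := ⟨le_rfl, hl.le⟩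
  have hll : l ∈ Icc 0 l := ⟨hl.le, le_rfl⟩
  have h0T : (0:ℝ) ∈ Icc 0 T := ⟨le_rfl, hT.le⟩
  have hlT : l ∈ Icc 0 T := ⟨hl.le, hly.trans hyT⟩
  have hyT' : y ∈ Icc 0 T := ⟨hl.le.trans hly, hyT⟩
  have hylT : y - l ∈ Icc 0 T := ⟨sub_nonneg.2 hly, by linarith⟩
  set w := riemannInvariant u (-1)
  have hbottom : ∫ s in (0:ℝ)..l, w 0 s = ∫ t in (0:ℝ)..l, w t 0 := by
    refine integral_congr fun s hs => ?_
    rw [uIcc_of_le hl.le] at hs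
    exact hw.riemannInvariant_eq_of_mem_characteristic (Or.inr rfl) ⟨hs, h0T⟩
      ⟨h0l, hs.1, hs.2.trans hlT.2⟩ hs.1 (by ring)
  have htop : ∫ s in l..y, w 0 s = ∫ s in (0:ℝ)..(y - l), w l s := by
    have hshift := integral_comp_add_right (w 0) l (a := 0) (b := y - l)
    rw [zero_add, sub_add_cancel] at hshift
    rw [← hshift]
    refine integral_congr fun s hs => ?_
    rw [uIcc_of_le hylT.1] at hs
    exact hw.riemannInvariant_eq_of_mem_characteristic (Or.inr rfl)
      ⟨hll, hs.1, hs.2.trans hylT.2⟩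
      ⟨h0l, by linarith [hs.1], by linarith [hs.2]⟩ (by linarith) (by ring)
  have hw_cont : ContinuousOn (uncurry w) (Icc 0 l ×ˢ Icc 0 T) := hw.continuousOn_riemannInvariant
  have hsplit := integral_add_adjacent_intervals
    (hw_cont.intervalIntegrable_snd_of_prod h0l h0T hlT)
    (hw_cont.intervalIntegrable_snd_of_prod h0l hlT hyT')
  have hleft := hw.integral_riemannInvariant_snd (ε := -1) hl h0l h0T hyT'
  have hinit := hw.integral_riemannInvariant_fst (ε := -1) hT h0T h0l hll
  have hright := hw.integral_riemannInvariant_snd (ε := -1) hl hll h0T hylT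
  linarith

end IsClassicalWaveSolution

theorem wave_necessary_conditions_large_time_general (l T : ℝ) (hl : 0 < l)
    (u : ℝ → ℝ → ℝ) (τ₁ : ℝ → ℝ)
    -- u is C² in the open rectangle
    (hC2 : ContDiffOn ℝ 2 (fun p : ℝ × ℝ => u p.1 p.2) (Set.Ioo 0 l ×ˢ Set.Ioo 0 T))
    -- u, u_x, u_y are continuous up to the boundary
    (hu : ContinuousOn (fun p : ℝ × ℝ => u p.1 p.2) (Set.Icc 0 l ×ˢ Set.Icc 0 T))
    (hux : ContinuousOn (fun p : ℝ × ℝ => deriv (fun t => u t p.2) p.1)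
      (Set.Icc 0 l ×ˢ Set.Icc 0 T))
    (huy : ContinuousOn (fun p : ℝ × ℝ => deriv (u p.1) p.2)
      (Set.Icc 0 l ×ˢ Set.Icc 0 T))
    -- the wave equation u_{xx} − u_{yy} = 0 in the open rectangle
    (heq : ∀ x ∈ Set.Ioo (0:ℝ) l, ∀ y ∈ Set.Ioo (0:ℝ) T,
      deriv (deriv (fun t => u t y)) x - deriv (deriv (u x)) y = 0)
    -- initial traces (attained continuously)
    (hτ₁ : ∀ x ∈ Set.Icc (0:ℝ) l, deriv (u x) 0 = τ₁ x) :
    ∀ y : ℝ, l ≤ y → y ≤ T →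
      u 0 y = (∫ t in (0:ℝ)..l, τ₁ t) +
          (∫ s in (0:ℝ)..(y - l), deriv (fun t => u t s) l) -
          (∫ s in (0:ℝ)..y, deriv (fun t => u t s) 0) + u l (y - l) ∧
      u l y = (∫ t in (0:ℝ)..l, τ₁ t) -
          (∫ s in (0:ℝ)..(y - l), deriv (fun t => u t s) 0) +
          (∫ s in (0:ℝ)..y, deriv (fun t => u t s) l) + u 0 (y - l) := by
  intro y hly hyT
  have hw : IsClassicalWaveSolution u l T :=
    ⟨hC2, hu, hux, huy, fun x hx y hy => sub_eq_zero.mp (heq x hx y hy)⟩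
  have hτ : ∫ t in (0:ℝ)..l, deriv (u t) 0 = ∫ t in (0:ℝ)..l, τ₁ t :=
    integral_congr fun t ht => hτ₁ t (by rwa [uIcc_of_le hl.le] at ht)
  have hrefl : ∫ t in (0:ℝ)..l, deriv (u (l - t)) 0 = ∫ t in (0:ℝ)..l, deriv (u t) 0 := by
    simpa using integral_comp_sub_left (fun t => deriv (u t) 0) l (a := 0) (b := l)
  have hleft := hw.left_boundary_eq hl hly hyT
  have hright := hw.reflect.left_boundary_eq hl hly hyT
  have hderiv : ∀ s x, deriv (fun t => u (l - t) s) x = -deriv (fun t => u t s) (l - x) :=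
    fun s => deriv_comp_const_sub (fun t => u t s) l
  simp only [sub_zero, sub_self, hrefl, hderiv, intervalIntegral.integral_neg] at hright
  constructor <;> linarith

/-- Necessary non-local conditions for the wave equation `u_{xx} − u_{yy} = 0` in
`(0,l)×(0,T)`, `T > l`, in the range `l ≤ y ≤ T`: with the initial velocity trace
`τ₁(x) = u_y(x,0)`,
`u(0,y) = ∫₀^l τ₁ + ∫₀^{y-l} u_x(l,s) ds − ∫₀^y u_x(0,s) ds + u(l,y-l)` and
`u(l,y) = ∫₀^l τ₁ − ∫₀^{y-l} u_x(0,s) ds + ∫₀^y u_x(l,s) ds + u(0,y-l)`. -/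
theorem wave_necessary_conditions_large_time (l T : ℝ) (hl : 0 < l) (hT : l < T)
    (u : ℝ → ℝ → ℝ) (τ₁ τ₂ : ℝ → ℝ)
    -- u is C² in the open rectangle
    (hC2 : ContDiffOn ℝ 2 (fun p : ℝ × ℝ => u p.1 p.2) (Set.Ioo 0 l ×ˢ Set.Ioo 0 T))
    -- u, u_x, u_y are continuous up to the boundary
    (hu : ContinuousOn (fun p : ℝ × ℝ => u p.1 p.2) (Set.Icc 0 l ×ˢ Set.Icc 0 T))
    (hux : ContinuousOn (fun p : ℝ × ℝ => deriv (fun t => u t p.2) p.1)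
      (Set.Icc 0 l ×ˢ Set.Icc 0 T))
    (huy : ContinuousOn (fun p : ℝ × ℝ => deriv (u p.1) p.2)
      (Set.Icc 0 l ×ˢ Set.Icc 0 T))
    -- the wave equation u_{xx} − u_{yy} = 0 in the open rectangle
    (heq : ∀ x ∈ Set.Ioo (0:ℝ) l, ∀ y ∈ Set.Ioo (0:ℝ) T,
      deriv (deriv (fun t => u t y)) x - deriv (deriv (u x)) y = 0)
    -- initial traces (attained continuously)
    (hτ₂ : ∀ x ∈ Set.Icc (0:ℝ) l, u x 0 = τ₂ x)
    (hτ₁ : ∀ x ∈ Set.Icc (0:ℝ) l, deriv (u x) 0 = τ₁ x) :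
    ∀ y : ℝ, l ≤ y → y ≤ T →
      u 0 y = (∫ t in (0:ℝ)..l, τ₁ t) +
          (∫ s in (0:ℝ)..(y - l), deriv (fun t => u t s) l) -
          (∫ s in (0:ℝ)..y, deriv (fun t => u t s) 0) + u l (y - l) ∧
      u l y = (∫ t in (0:ℝ)..l, τ₁ t) -
          (∫ s in (0:ℝ)..(y - l), deriv (fun t => u t s) 0) +
          (∫ s in (0:ℝ)..y, deriv (fun t => u t s) l) + u 0 (y - l) :=
  wave_necessary_conditions_large_time_general l T hl u τ₁ hC2 hu hux huy heq hτ₁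
end Calculus
end
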